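/- Two-sided bound on L applied to the approximating candidate: Let v*, u be C² functions on B with L v* = 0 on B and L u = −1 on B. Let C := max{4, sup_{x ∈ B}(Σ_{i,j}|a_ij(x)| + Σ_i |f_0i(x)|)}, let δ > 0 with C·δ ≤ 1/2, and let p, q be real polynomials with ‖v* − p‖_{C²(B)} ≤ δ and ‖u − q‖_{C²(B)} ≤ δ. Set ε := 2Cδ/(1 − Cδ) and v_d := p + ε·q − ε. Then for all x ∈ B, −7Cδ ≤ (L v_d)(x) ≤ −Cδ. -/

import Mathlib

open MvPolynomial

noncomputable section

/-- The closed Euclidean unit ball in `ℝⁿ`. -/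
def Bset (n : ℕ) : Set (Fin n → ℝ) := {x | ∑ i, x i ^ 2 ≤ 1}

/-- The generator `L` of the diffusion, acting on `C²` functions:
`(Lv)(x) = −Σ_{i,j} a_ij(x) ∂²v/∂x_i∂x_j(x) + Σ_i f_0i(x) ∂v/∂x_i(x)`. -/
def Lgen {n : ℕ} (a : Fin n → Fin n → MvPolynomial (Fin n) ℝ)
    (f0 : Fin n → MvPolynomial (Fin n) ℝ) (v : (Fin n → ℝ) → ℝ) (x : Fin n → ℝ) : ℝ :=
  -(∑ i, ∑ j, eval x (a i j) *
      fderiv ℝ (fun y => fderiv ℝ v y (Pi.single j 1)) x (Pi.single i 1)) +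
    ∑ i, eval x (f0 i) * fderiv ℝ v x (Pi.single i 1)

/-- `‖h‖_{C²(B)} ≤ δ`: the function and all its first and second order partial derivatives
are bounded by `δ` in sup-norm on `B`. -/
def C2BoundedBy (n : ℕ) (h : (Fin n → ℝ) → ℝ) (δ : ℝ) : Prop :=
  ∀ x ∈ Bset n, |h x| ≤ δ ∧
    (∀ i : Fin n, |fderiv ℝ h x (Pi.single i 1)| ≤ δ) ∧
    (∀ i j : Fin n,
      |fderiv ℝ (fun y => fderiv ℝ h y (Pi.single j 1)) x (Pi.single i 1)| ≤ δ)

/-! `L` is linear on `C²` functions, so `L v_d = L p + ε L q`, where `L p = -L(v* - p)` and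
`L q = -1 - L(u - q)` lie within `Cδ` of `0` and `-1` because `|L h| ≤ C ‖h‖_{C²(B)}`.
The value of `ε` is the one solving `ε (1 - Cδ) = 2Cδ`, which makes the upper bound
`Cδ + ε (Cδ - 1) = -Cδ` exact; since `Cδ ≤ 1/2` it also gives `ε ≤ 2`, hence the lower bound. -/

theorem isCompact_Bset (n : ℕ) : IsCompact (Bset n) := by
  refine Metric.isCompact_of_isClosed_isBounded (isClosed_le (by fun_prop) continuous_const)
    (Metric.isBounded_closedBall (x := 0) (r := 1) |>.subset fun x hx => ?_)
  rw [mem_closedBall_zero_iff, pi_norm_le_iff_of_nonneg zero_le_one]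
  intro i
  rw [Real.norm_eq_abs, ← sq_le_one_iff_abs_le_one]
  exact (Finset.single_le_sum (fun j _ => sq_nonneg (x j)) (Finset.mem_univ i)).trans hx

theorem ContDiffOn.differentiableAt_fderiv_apply {E F : Type*} [NormedAddCommGroup E]
    [NormedSpace ℝ E] [NormedAddCommGroup F] [NormedSpace ℝ F] {f : E → F} {U : Set E}
    (hf : ContDiffOn ℝ 2 f U) (hU : IsOpen U) {x : E} (hx : x ∈ U) (v : E) :
    DifferentiableAt ℝ (fun y => fderiv ℝ f y v) x :=
  ((hf.fderiv_of_isOpen (m := 1) hU (by norm_num)).clm_apply contDiffOn_const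
    |>.differentiableOn one_ne_zero).differentiableAt (hU.mem_nhds hx)

theorem abs_sum_mul_le {ι : Type*} [Fintype ι] (c y : ι → ℝ) {δ : ℝ} (hy : ∀ i, |y i| ≤ δ) :
    |∑ i, c i * y i| ≤ (∑ i, |c i|) * δ :=
  calc |∑ i, c i * y i| ≤ ∑ i, |c i * y i| := Finset.abs_sum_le_sum_abs _ _
    _ ≤ ∑ i, |c i| * δ := Finset.sum_le_sum fun i _ => by
        rw [abs_mul]; exact mul_le_mul_of_nonneg_left (hy i) (abs_nonneg _)
    _ = (∑ i, |c i|) * δ := (Finset.sum_mul ..).symm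

theorem add_mul_mem_Icc_of_abs_le {A B δ ε : ℝ} (hδ : δ ≤ 1 / 2) (hA : |A| ≤ δ)
    (hB : |B + 1| ≤ δ) (hε : ε = 2 * δ / (1 - δ)) : A + ε * B ∈ Set.Icc (-7 * δ) (-δ) := by
  have hδ0 : 0 ≤ δ := (abs_nonneg A).trans hA
  obtain ⟨hA₁, hA₂⟩ := abs_le.mp hA
  obtain ⟨hB₁, hB₂⟩ := abs_le.mp hB
  have hεδ : ε * (1 - δ) = 2 * δ := by
    rw [hε, div_mul_cancel₀]
    linarith
  have hε0 : 0 ≤ ε := hε ▸ div_nonneg (by linarith) (by linarith)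
  have hε2 : ε ≤ 2 := by nlinarith
  constructor
  · nlinarith [mul_le_mul_of_nonneg_left hB₁ hε0, mul_nonneg (sub_nonneg.mpr hε2) hδ0]
  · nlinarith [mul_le_mul_of_nonneg_left hB₂ hε0]

section Generator

variable {n : ℕ} (a : Fin n → Fin n → MvPolynomial (Fin n) ℝ)
  (f0 : Fin n → MvPolynomial (Fin n) ℝ)

theorem Lgen_add_mul_sub_const {U : Set (Fin n → ℝ)} (hU : IsOpen U) {f g : (Fin n → ℝ) → ℝ}
    (hf : ContDiffOn ℝ 2 f U) (hg : ContDiffOn ℝ 2 g U) (c e : ℝ) {x : Fin n → ℝ} (hx : x ∈ U) :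
    Lgen a f0 (fun y => f y + c * g y - e) x = Lgen a f0 f x + c * Lgen a f0 g x := by
  have hD1 : ∀ y ∈ U, ∀ v, fderiv ℝ (fun z => f z + c * g z - e) y v
      = fderiv ℝ f y v + c * fderiv ℝ g y v := fun y hy v => by
    have hfy := (hf.differentiableOn (by norm_num)).differentiableAt (hU.mem_nhds hy)
    have hgy := (hg.differentiableOn (by norm_num)).differentiableAt (hU.mem_nhds hy)
    rw [((hfy.hasFDerivAt.fun_add (hgy.hasFDerivAt.const_mul c)).sub_const e).fderiv]
    simp
  have hD2 : ∀ v w, fderiv ℝ (fun y => fderiv ℝ (fun z => f z + c * g z - e) y v) x w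
      = fderiv ℝ (fun y => fderiv ℝ f y v) x w + c * fderiv ℝ (fun y => fderiv ℝ g y v) x w :=
    fun v w => by
      have hE : (fun y => fderiv ℝ (fun z => f z + c * g z - e) y v)
          =ᶠ[nhds x] fun y => fderiv ℝ f y v + c * fderiv ℝ g y v :=
        Filter.eventually_of_mem (hU.mem_nhds hx) fun y hy => hD1 y hy v
      rw [hE.fderiv_eq, ((hf.differentiableAt_fderiv_apply hU hx v).hasFDerivAt.fun_add
        ((hg.differentiableAt_fderiv_apply hU hx v).hasFDerivAt.const_mul c)).fderiv]
      simp
  simp only [Lgen, hD1 x hx, hD2, mul_add, Finset.sum_add_distrib, mul_left_comm _ c,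
    ← Finset.mul_sum]
  ring

theorem Lgen_sub {U : Set (Fin n → ℝ)} (hU : IsOpen U) {f g : (Fin n → ℝ) → ℝ}
    (hf : ContDiffOn ℝ 2 f U) (hg : ContDiffOn ℝ 2 g U) {x : Fin n → ℝ} (hx : x ∈ U) :
    Lgen a f0 (fun y => f y - g y) x = Lgen a f0 f x - Lgen a f0 g x := by
  simpa [← sub_eq_add_neg] using Lgen_add_mul_sub_const a f0 hU hf hg (-1) 0 hx

theorem abs_Lgen_le {h : (Fin n → ℝ) → ℝ} {δ : ℝ} (hh : C2BoundedBy n h δ) {x : Fin n → ℝ}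
    (hx : x ∈ Bset n) :
    |Lgen a f0 h x| ≤ ((∑ i, ∑ j, |eval x (a i j)|) + ∑ i, |eval x (f0 i)|) * δ := by
  obtain ⟨-, hfirst, hsecond⟩ := hh x hx
  have h2 := abs_sum_mul_le (fun ij : Fin n × Fin n => eval x (a ij.1 ij.2))
    (fun ij => fderiv ℝ (fun y => fderiv ℝ h y (Pi.single ij.2 1)) x (Pi.single ij.1 1))
    fun ij => hsecond ij.1 ij.2
  have h1 := abs_sum_mul_le (fun i => eval x (f0 i)) _ hfirst
  simp only [Fintype.sum_prod_type] at h2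
  calc |Lgen a f0 h x| ≤ _ := (abs_add_le _ _).trans_eq (by rw [abs_neg])
    _ ≤ _ := add_le_add h2 h1
    _ = _ := (add_mul ..).symm

theorem coeffSum_le_sSup {x : Fin n → ℝ} (hx : x ∈ Bset n) :
    (∑ i, ∑ j, |eval x (a i j)|) + ∑ i, |eval x (f0 i)| ≤ sSup ((fun x =>
      (∑ i, ∑ j, |eval x (a i j)|) + ∑ i, |eval x (f0 i)|) '' Bset n) :=
  have := fun p : MvPolynomial (Fin n) ℝ => MvPolynomial.continuous_eval p
  le_csSup ((isCompact_Bset n).image (by fun_prop)).bddAbove ⟨x, hx, rfl⟩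

end Generator

theorem stmt13_general (n : ℕ)
    (a : Fin n → Fin n → MvPolynomial (Fin n) ℝ) (f0 : Fin n → MvPolynomial (Fin n) ℝ)
    (U : Set (Fin n → ℝ)) (hU : IsOpen U) (hBU : Bset n ⊆ U)
    (vstar u : (Fin n → ℝ) → ℝ)
    (hvstarC2 : ContDiffOn ℝ 2 vstar U) (huC2 : ContDiffOn ℝ 2 u U)
    (hvstarL : ∀ x ∈ Bset n, Lgen a f0 vstar x = 0)
    (huL : ∀ x ∈ Bset n, Lgen a f0 u x = -1)
    (Cc : ℝ)
    (hC : Cc = max 4 (sSup ((fun x =>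
      (∑ i, ∑ j, |eval x (a i j)|) + ∑ i, |eval x (f0 i)|) '' Bset n)))
    (δ : ℝ) (hδ : 0 < δ) (hCδ : Cc * δ ≤ 1 / 2)
    (p q : MvPolynomial (Fin n) ℝ)
    (hp : C2BoundedBy n (fun y => vstar y - eval y p) δ)
    (hq : C2BoundedBy n (fun y => u y - eval y q) δ)
    (ε : ℝ) (hε : ε = 2 * Cc * δ / (1 - Cc * δ)) :
    ∀ x ∈ Bset n,
      -7 * Cc * δ ≤ Lgen a f0 (fun y => eval y p + ε * eval y q - ε) x ∧
      Lgen a f0 (fun y => eval y p + ε * eval y q - ε) x ≤ -(Cc * δ) := by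
  intro x hx
  have hpoly (r : MvPolynomial (Fin n) ℝ) : ContDiffOn ℝ 2 (fun y => eval y r) U :=
    (AnalyticOnNhd.eval_mvPolynomial r).contDiff.contDiffOn
  have hresidual {h : (Fin n → ℝ) → ℝ} (hh : C2BoundedBy n h δ) : |Lgen a f0 h x| ≤ Cc * δ :=
    (abs_Lgen_le a f0 hh hx).trans <| mul_le_mul_of_nonneg_right
      (hC ▸ (coeffSum_le_sSup a f0 hx).trans (le_max_right _ _)) hδ.le
  have hLp := hresidual hp
  rw [Lgen_sub a f0 hU hvstarC2 (hpoly p) (hBU hx), hvstarL x hx, zero_sub, abs_neg] at hLp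
  have hLq := hresidual hq
  rw [Lgen_sub a f0 hU huC2 (hpoly q) (hBU hx), huL x hx, abs_sub_comm, sub_neg_eq_add] at hLq
  rw [Lgen_add_mul_sub_const a f0 hU (hpoly p) (hpoly q) ε ε (hBU hx)]
  obtain ⟨hlower, hupper⟩ := add_mul_mem_Icc_of_abs_le hCδ hLp hLq (hε.trans (by ring))
  exact ⟨by linarith, hupper⟩

/-- Two-sided bound on `L` applied to the approximating candidate: with
`C = max{4, sup_B(Σ|a_ij| + Σ|f_0i|)}`, `Cδ ≤ 1/2`, `‖v* − p‖_{C²(B)} ≤ δ`,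
`‖u − q‖_{C²(B)} ≤ δ`, `ε = 2Cδ/(1 − Cδ)` and `v_d = p + ε·q − ε`, one has
`−7Cδ ≤ (L v_d)(x) ≤ −Cδ` for all `x ∈ B`. -/
theorem stmt13 (n : ℕ) (hn : 1 ≤ n)
    (a : Fin n → Fin n → MvPolynomial (Fin n) ℝ) (f0 : Fin n → MvPolynomial (Fin n) ℝ)
    (hFact : ∃ (r : ℕ) (F : Fin n → Fin r → MvPolynomial (Fin n) ℝ),
      ∀ i j, a i j = ∑ k, F i k * F j k)
    (hPD : ∀ x ∈ Bset n, Matrix.PosDef (Matrix.of fun i j => eval x (a i j)))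
    (U : Set (Fin n → ℝ)) (hU : IsOpen U) (hBU : Bset n ⊆ U)
    (vstar u : (Fin n → ℝ) → ℝ)
    (hvstarC2 : ContDiffOn ℝ 2 vstar U) (huC2 : ContDiffOn ℝ 2 u U)
    (hvstarL : ∀ x ∈ Bset n, Lgen a f0 vstar x = 0)
    (huL : ∀ x ∈ Bset n, Lgen a f0 u x = -1)
    (Cc : ℝ)
    (hC : Cc = max 4 (sSup ((fun x =>
      (∑ i, ∑ j, |eval x (a i j)|) + ∑ i, |eval x (f0 i)|) '' Bset n)))
    (δ : ℝ) (hδ : 0 < δ) (hCδ : Cc * δ ≤ 1 / 2)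
    (p q : MvPolynomial (Fin n) ℝ)
    (hp : C2BoundedBy n (fun y => vstar y - eval y p) δ)
    (hq : C2BoundedBy n (fun y => u y - eval y q) δ)
    (ε : ℝ) (hε : ε = 2 * Cc * δ / (1 - Cc * δ)) :
    ∀ x ∈ Bset n,
      -7 * Cc * δ ≤ Lgen a f0 (fun y => eval y p + ε * eval y q - ε) x ∧
      Lgen a f0 (fun y => eval y p + ε * eval y q - ε) x ≤ -(Cc * δ) :=
  stmt13_general n a f0 U hU hBU vstar u hvstarC2 huC2 hvstarL huL Cc hC δ hδ hCδ p q hp hq ε hε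

end
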